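/- For every non-dyadic x ∈ [0,1] with binary digits ε_n, if p_k denotes the position of the k-th 0 in the expansion, then L_a(x + 2^{-p_k}) − L_a(x) = a^k (1-a)^{p_k - k} C_1(x,k), where C_1(x,k) satisfies min{1, (1-a)/a} ≤ C_1(x,k) ≤ max{1, (1-a)/a}. -/

import Mathlib

open Topology Filter Set

/-- The de Rham functional equation characterizing Lebesgue's singular function `L_a`
on `[0,1]`, together with continuity. -/
def deRham (a : ℝ) (L : ℝ → ℝ) : Prop :=
  ContinuousOn L (Set.Icc 0 1) ∧
  (∀ x ∈ Set.Icc (0:ℝ) (1/2), L x = a * L (2*x)) ∧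
  (∀ x ∈ Set.Icc (1/2:ℝ) 1, L x = (1-a) * L (2*x - 1) + a)

/-! The increment of `L` over the dyadic interval of length `2^{-p_k}` starting at `x` is the
`L`-mass `a^k (1-a)^{p_k-1-k}` of the level-`(p_k - 1)` dyadic cylinder containing `x`, times
`L((1+t)/2) - L(t/2) = a + (1-2a) L(t)`, where `t` is the tail of `x` after position `p_k`.
Since `L` maps `[0,1]` into itself, `C₁ = 1 + ((1-a)/a - 1) L(t)` is a convex combination of
`1` and `(1-a)/a`. -/

open scoped Finset

noncomputable def binaryPrefix (d : ℕ → ℕ) (m : ℕ) : ℝ :=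
  ∑ n ∈ Finset.range m, (d (n + 1) : ℝ) / 2 ^ (n + 1)

noncomputable def binaryValue (d : ℕ → ℕ) : ℝ :=
  ∑' n : ℕ, (d (n + 1) : ℝ) / 2 ^ (n + 1)

/-- The `L_a`-mass of the dyadic interval `[binaryPrefix d m, binaryPrefix d m + 2^{-m}]`. -/
def cylinderMass (a : ℝ) (d : ℕ → ℕ) (m : ℕ) : ℝ :=
  ∏ n ∈ Finset.range m, if d (n + 1) = 0 then a else 1 - a

theorem binaryPrefix_succ_add (d : ℕ → ℕ) (m : ℕ) (y : ℝ) :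
    binaryPrefix d (m + 1) + y / 2 ^ (m + 1) =
      binaryPrefix d m + (d (m + 1) + y) / 2 / 2 ^ m := by
  rw [binaryPrefix, binaryPrefix, Finset.sum_range_succ, pow_succ]
  ring

section binaryValue

variable {d : ℕ → ℕ} (hd : ∀ n, d n ≤ 1)
include hd

theorem digit_div_two_pow_le (n : ℕ) : (d (n + 1) : ℝ) / 2 ^ (n + 1) ≤ 1 / 2 / 2 ^ n := by
  rw [div_div, ← pow_succ']
  gcongr
  exact_mod_cast hd _

theorem summable_binaryValue : Summable fun n => (d (n + 1) : ℝ) / 2 ^ (n + 1) :=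
  (summable_geometric_two' 1).of_nonneg_of_le (fun _ => by positivity) (digit_div_two_pow_le hd)

theorem binaryValue_mem_Icc : binaryValue d ∈ Icc 0 1 :=
  ⟨tsum_nonneg fun _ => by positivity,
    hasSum_le (digit_div_two_pow_le hd) (summable_binaryValue hd).hasSum
      (hasSum_geometric_two' 1)⟩

theorem binaryValue_eq_binaryPrefix_add (m : ℕ) :
    binaryValue d = binaryPrefix d m + binaryValue (fun n => d (n + m)) / 2 ^ m := by
  rw [binaryValue, ← (summable_binaryValue hd).sum_add_tsum_nat_add m, binaryValue,
    ← tsum_div_const]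
  congr 1
  refine tsum_congr fun n => ?_
  rw [add_right_comm, pow_add, div_div]

end binaryValue

theorem cylinderMass_succ (a : ℝ) (d : ℕ → ℕ) (m : ℕ) :
    cylinderMass a d (m + 1) = cylinderMass a d m * if d (m + 1) = 0 then a else 1 - a :=
  Finset.prod_range_succ _ _

theorem cylinderMass_eq_pow_mul_pow (a : ℝ) (d : ℕ → ℕ) (m : ℕ) :
    cylinderMass a d m = a ^ #{n ∈ Finset.range m | d (n + 1) = 0} *
      (1 - a) ^ (m - #{n ∈ Finset.range m | d (n + 1) = 0}) := by
  have hsplit :=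
    Finset.card_filter_add_card_filter_not (s := Finset.range m) (fun n => d (n + 1) = 0)
  rw [Finset.card_range] at hsplit
  rw [cylinderMass, Finset.prod_ite, Finset.prod_const, Finset.prod_const]
  congr 2
  omega

namespace deRham

variable {a : ℝ} {L : ℝ → ℝ}

theorem map_zero (ha1 : a < 1) (hL : deRham a L) : L 0 = 0 := by
  have h : L 0 = a * L 0 := by simpa using hL.2.1 0 (by norm_num)
  have : (1 - a) * L 0 = 0 := by linarith
  exact (mul_eq_zero.1 this).resolve_left (by linarith)

theorem map_half_mul (hL : deRham a L) {y : ℝ} (hy : y ∈ Icc 0 1) : L (y / 2) = a * L y := by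
  simpa [mul_div_cancel₀] using hL.2.1 (y / 2) ⟨by linarith [hy.1], by linarith [hy.2]⟩

theorem map_one_add_half (hL : deRham a L) {y : ℝ} (hy : y ∈ Icc 0 1) :
    L ((1 + y) / 2) = (1 - a) * L y + a := by
  have := hL.2.2 ((1 + y) / 2) ⟨by linarith [hy.1], by linarith [hy.2]⟩
  rwa [show 2 * ((1 + y) / 2) - 1 = y by ring] at this

theorem exists_eq_mul_or_eq_mul_add (hL : deRham a L) {x : ℝ} (hx : x ∈ Icc 0 1) :
    ∃ y ∈ Icc (0 : ℝ) 1, L x = a * L y ∨ L x = (1 - a) * L y + a := by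
  rcases le_total x (1 / 2) with h | h
  · exact ⟨2 * x, ⟨by linarith [hx.1], by linarith⟩, Or.inl (hL.2.1 x ⟨hx.1, h⟩)⟩
  · exact ⟨2 * x - 1, ⟨by linarith, by linarith [hx.2]⟩, Or.inr (hL.2.2 x ⟨h, hx.2⟩)⟩

theorem mapsTo_Icc (ha0 : 0 < a) (ha1 : a < 1) (hL : deRham a L) :
    MapsTo L (Icc 0 1) (Icc 0 1) := by
  have hne : (Icc (0 : ℝ) 1).Nonempty := nonempty_Icc.2 zero_le_one
  obtain ⟨xM, hxM, hmax⟩ := isCompact_Icc.exists_isMaxOn hne hL.1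
  obtain ⟨xm, hxm, hmin⟩ := isCompact_Icc.exists_isMinOn hne hL.1
  have hM : L xM ≤ 1 := by
    obtain ⟨y, hy, h | h⟩ := hL.exists_eq_mul_or_eq_mul_add hxM <;>
      have : L y ≤ L xM := hmax hy <;> nlinarith
  have hm : 0 ≤ L xm := by
    obtain ⟨y, hy, h | h⟩ := hL.exists_eq_mul_or_eq_mul_add hxm <;>
      have : L xm ≤ L y := hmin hy <;> nlinarith
  exact fun y hy => ⟨hm.trans (hmin hy), (hmax hy).trans hM⟩

theorem half_add_digit (ha1 : a < 1) (hL : deRham a L) {e : ℕ} (he : e ≤ 1) {y : ℝ}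
    (hy : y ∈ Icc 0 1) :
    L ((e + y) / 2) = L (e / 2) + (if e = 0 then a else 1 - a) * L y := by
  interval_cases e
  · simpa [hL.map_zero ha1] using hL.map_half_mul hy
  · have h := hL.map_one_add_half hy
    have h0 := hL.map_one_add_half (left_mem_Icc.2 zero_le_one)
    simp only [add_zero, hL.map_zero ha1, mul_zero, zero_add] at h0
    simp only [Nat.cast_one, one_ne_zero, if_false, h, h0]
    ring

theorem apply_binaryPrefix_add (ha1 : a < 1) (hL : deRham a L) {d : ℕ → ℕ}
    (hd : ∀ n, d n ≤ 1) (m : ℕ) {y : ℝ} (hy : y ∈ Icc 0 1) :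
    L (binaryPrefix d m + y / 2 ^ m) = L (binaryPrefix d m) + cylinderMass a d m * L y := by
  induction m generalizing y with
  | zero => simp [binaryPrefix, cylinderMass, hL.map_zero ha1]
  | succ m ih =>
    have hdm : (d (m + 1) : ℝ) ≤ 1 := by exact_mod_cast hd (m + 1)
    have hmem : ∀ z ∈ Icc (0 : ℝ) 1, (d (m + 1) + z) / 2 ∈ Icc (0 : ℝ) 1 := fun z hz =>
      ⟨by have := hz.1; positivity, by linarith [hz.2]⟩
    have hprefix :
        binaryPrefix d (m + 1) = binaryPrefix d m + (d (m + 1) + 0) / 2 / 2 ^ m := by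
      simpa using binaryPrefix_succ_add d m 0
    rw [binaryPrefix_succ_add, hprefix, ih (hmem y hy), ih (hmem 0 (left_mem_Icc.2 zero_le_one)),
      add_zero, hL.half_add_digit ha1 (hd _) hy, cylinderMass_succ]
    ring

end deRham

theorem card_zero_digits_before {ε p : ℕ → ℕ} (hp1 : ∀ k, 1 ≤ p k) (hpm : StrictMono p)
    (hp0 : ∀ k, ε (p k) = 0) (hpsurj : ∀ n, 1 ≤ n → ε n = 0 → ∃ k, p k = n)
    {k m : ℕ} (hm : p k = m + 1) : #{n ∈ Finset.range m | ε (n + 1) = 0} = k := by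
  have hzeros : {n ∈ Finset.range m | ε (n + 1) = 0} = (Finset.range k).image (p · - 1) := by
    ext n
    simp only [Finset.mem_filter, Finset.mem_range, Finset.mem_image]
    constructor
    · rintro ⟨hn, hzero⟩
      obtain ⟨j, hj⟩ := hpsurj (n + 1) n.succ_pos hzero
      exact ⟨j, hpm.lt_iff_lt.1 (show p j < p k by omega), by omega⟩
    · rintro ⟨j, hj, rfl⟩
      have := hp1 j
      have : p j < p k := hpm hj
      exact ⟨by omega, by rw [Nat.sub_add_cancel (hp1 j)]; exact hp0 j⟩
  rw [hzeros, Finset.card_image_of_injOn, Finset.card_range]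
  intro i _ j _ hij
  have := hp1 i
  have := hp1 j
  exact hpm.injective (by simp only at hij; omega)

theorem key_increment_formula_general (a : ℝ) (ha0 : 0 < a) (ha1 : a < 1)
    (L : ℝ → ℝ) (hL : deRham a L)
    (ε : ℕ → ℕ) (hε : ∀ n, ε n ≤ 1)
    (x : ℝ) (hx : x = ∑' n : ℕ, (ε (n+1) : ℝ) / 2 ^ (n+1))
    (p : ℕ → ℕ) (hp1 : ∀ k, 1 ≤ p k) (hpm : StrictMono p)
    (hp0 : ∀ k, ε (p k) = 0)
    (hpsurj : ∀ n, 1 ≤ n → ε n = 0 → ∃ k, p k = n) (k : ℕ) :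
    ∃ C1 : ℝ, min 1 ((1-a)/a) ≤ C1 ∧ C1 ≤ max 1 ((1-a)/a) ∧
      L (x + (1/2) ^ (p k)) - L x = a ^ (k+1) * (1-a) ^ (p k - (k+1)) * C1 := by
  obtain ⟨m, hm⟩ : ∃ m, p k = m + 1 := ⟨p k - 1, (Nat.sub_add_cancel (hp1 k)).symm⟩
  set t := binaryValue fun n => ε (n + (m + 1))
  have ht : t ∈ Icc 0 1 := binaryValue_mem_Icc fun _ => hε _
  have hLt : L t ∈ Icc 0 1 := hL.mapsTo_Icc ha0 ha1 ht
  have hx_eq : x = binaryPrefix ε m + t / 2 / 2 ^ m := by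
    have := binaryValue_eq_binaryPrefix_add hε (m + 1)
    rw [binaryPrefix_succ_add, show ε (m + 1) = 0 from hm ▸ hp0 k, Nat.cast_zero,
      zero_add] at this
    exact hx.trans this
  have hx_add_eq : x + (1 / 2) ^ p k = binaryPrefix ε m + (1 + t) / 2 / 2 ^ m := by
    rw [hx_eq, hm, one_div, inv_pow, pow_succ]
    ring
  have hcard := card_zero_digits_before hp1 hpm hp0 hpsurj hm
  refine ⟨1 + ((1 - a) / a - 1) * L t, ?_⟩
  have hC : 1 + ((1 - a) / a - 1) * L t ∈ Icc (min 1 ((1 - a) / a)) (max 1 ((1 - a) / a)) := by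
    rw [Icc_min_max, ← segment_eq_uIcc]
    exact ⟨1 - L t, L t, by linarith [hLt.2], hLt.1, by ring, by simp only [smul_eq_mul]; ring⟩
  refine ⟨hC.1, hC.2, ?_⟩
  have ht_half : t / 2 ∈ Icc 0 1 := ⟨by linarith [ht.1], by linarith [ht.2]⟩
  have ht_one_add_half : (1 + t) / 2 ∈ Icc 0 1 := ⟨by linarith [ht.1], by linarith [ht.2]⟩
  rw [hx_add_eq, hx_eq, hL.apply_binaryPrefix_add ha1 hε m ht_one_add_half,
    hL.apply_binaryPrefix_add ha1 hε m ht_half,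
    hL.map_one_add_half ht, hL.map_half_mul ht, cylinderMass_eq_pow_mul_pow, hcard, hm,
    Nat.add_sub_add_right]
  field_simp
  ring

theorem key_increment_formula (a : ℝ) (ha0 : 0 < a) (ha1 : a < 1)
    (ha : a ≠ 1/2) (L : ℝ → ℝ) (hL : deRham a L)
    (ε : ℕ → ℕ) (hε : ∀ n, ε n ≤ 1)
    (hinf1 : ∀ N, ∃ n ≥ N, ε n = 1)
    (x : ℝ) (hx : x = ∑' n : ℕ, (ε (n+1) : ℝ) / 2 ^ (n+1))
    (p : ℕ → ℕ) (hp1 : ∀ k, 1 ≤ p k) (hpm : StrictMono p)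
    (hp0 : ∀ k, ε (p k) = 0)
    (hpsurj : ∀ n, 1 ≤ n → ε n = 0 → ∃ k, p k = n) (k : ℕ) :
    ∃ C1 : ℝ, min 1 ((1-a)/a) ≤ C1 ∧ C1 ≤ max 1 ((1-a)/a) ∧
      L (x + (1/2) ^ (p k)) - L x = a ^ (k+1) * (1-a) ^ (p k - (k+1)) * C1 :=
  key_increment_formula_general a ha0 ha1 L hL ε hε x hx p hp1 hpm hp0 hpsurj k
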